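/- Let d₁ = x₀² + x₀·x₁ + x₁² and d₂ = x₀²·x₁ + x₀·x₁² in MvPolynomial (Fin 2) (ZMod 2). Then (a) a polynomial p is fixed by the substitution automorphism associated with every matrix g ∈ GL (Fin 2) (ZMod 2) if and only if p belongs to Algebra.adjoin (ZMod 2) {d₁, d₂}; and (b) d₁ and d₂ are algebraically independent over ZMod 2. Hence the mod-2 Dickson algebra D(2) = H*(V₂)^{GL₂(F₂)} is the polynomial algebra F₂[d₁, d₂] on the Dickson invariants u² + uv + v² and uv(u + v). -/

import Mathlib

/-!
Every `g ∈ GL₂(𝔽₂)` permutes the linear forms `v₀x₀ + v₁x₁`, so it fixes the coefficients `d₁`,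
`d₂` of the Dickson polynomial `∏_{v ∈ 𝔽₂²} (T + v₀x₀ + v₁x₁) = T⁴ + d₁T² + d₂T`.

Conversely, `x₁` is a root of the monic `Y² + x₀Y + x₀² + d₁` over `𝔽₂[x₀, d₁]` and `x₀` a root of
the monic `Y³ + d₁Y + d₂` over `𝔽₂[d₁, d₂]`; division by these polynomials, after viewing
`𝔽₂[x₀, x₁]` as a polynomial ring in one variable over the other, gives
`𝔽₂[x₀, x₁] = 𝔽₂[x₀, d₁] + 𝔽₂[x₀, d₁] x₁` and `𝔽₂[x₀, d₁] = Σ_{i<3} 𝔽₂[d₁, d₂] x₀ⁱ`.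
An invariant `a + b x₁` (`a, b ∈ 𝔽₂[x₀, d₁]`) is fixed by the transvection `x₁ ↦ x₀ + x₁`,
which fixes `x₀` and `d₁`, so `b x₀ = 0`. An invariant `a + u x₀ + w x₀²` (`a, u, w ∈ 𝔽₂[d₁, d₂]`)
is fixed by the substitution of order three cycling `x₀ ↦ x₁ ↦ x₀ + x₁ ↦ x₀`, so the quadratic
`a + uY + wY²` takes the same value at three distinct points and `u = w = 0`.

The same one-variable viewpoint shows that `(x₀, x₁) ↦ (x₀, d₁)` and
`(x₀, x₁) ↦ (x₁, x₀³ + x₀x₁)` define injective endomorphisms; their composite is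
`(x₀, x₁) ↦ (d₁, d₂)`, whence the algebraic independence.
-/

open MvPolynomial Matrix

/-- The substitution automorphism associated with a matrix `g`, sending each
variable `X i` to `∑ j, g i j • X j`. -/
noncomputable def substAction {n : ℕ} (g : GL (Fin n) (ZMod 2)) :
    MvPolynomial (Fin n) (ZMod 2) →ₐ[ZMod 2] MvPolynomial (Fin n) (ZMod 2) :=
  MvPolynomial.aeval fun i => ∑ j, (g : Matrix (Fin n) (Fin n) (ZMod 2)) i j • X j

namespace Polynomial

variable {R : Type*} [CommRing R]

theorem Monic.exists_eq_sum_comp_mul_X_pow {f : R[X]} (hf : f.Monic) {n : ℕ}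
    (hn : f.natDegree = n) (hn0 : n ≠ 0) (p : R[X]) :
    ∃ c : Fin n → R[X], p = ∑ i, (c i).comp f * X ^ (i : ℕ) := by
  induction p using degree_lt_wf.induction with
  | _ p IH =>
    rcases eq_or_ne p 0 with rfl | hp
    · exact ⟨0, by simp⟩
    obtain ⟨c, hc⟩ := IH (p /ₘ f)
      (degree_divByMonic_lt p f hp (natDegree_pos_iff_degree_pos.mp (by omega)))
    refine ⟨fun i => X * c i + C ((p %ₘ f).coeff i), ?_⟩
    calc p = p %ₘ f + f * (p /ₘ f) := (modByMonic_add_div p f).symm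
      _ = _ := by
        nth_rw 1 [← sum_modByMonic_coeff hf (hn ▸ degree_le_natDegree)]
        rw [hc, Finset.mul_sum, ← Finset.sum_add_distrib]
        refine Finset.sum_congr rfl fun i _ => ?_
        simp only [add_comp, mul_comp, X_comp, C_comp, ← C_mul_X_pow_eq_monomial]
        ring

theorem comp_left_injective [IsDomain R] {f : R[X]} (hf : f.natDegree ≠ 0) :
    Function.Injective fun p : R[X] => p.comp f := by
  intro p q h
  have h0 : (p - q).comp f = 0 := by rw [sub_comp, sub_eq_zero]; exact h
  have hd : (p - q).natDegree = 0 := by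
    have := congrArg natDegree h0
    rw [natDegree_comp, natDegree_zero, mul_eq_zero] at this
    exact this.resolve_right hf
  rw [eq_C_of_natDegree_eq_zero hd, C_comp, C_eq_zero, ← C_eq_zero,
    ← eq_C_of_natDegree_eq_zero hd, sub_eq_zero] at h0
  exact h0

end Polynomial

theorem exists_eq_sum_mul_pow_of_map_eq_comp {R A F : Type*} [CommRing R] [CommRing A]
    [FunLike F A (Polynomial R)] [RingHomClass F A (Polynomial R)] {φ : F}
    (hφ : Function.Injective φ) {φ' : A → Polynomial R} (hφ' : Function.Surjective φ')
    {ψ : A → A} {f : Polynomial R} (hψ : ∀ q, φ (ψ q) = (φ' q).comp f) (hf : f.Monic) {n : ℕ}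
    (hn : f.natDegree = n) (hn0 : n ≠ 0) {y : A} (hy : φ y = Polynomial.X) (p : A) :
    ∃ r : Fin n → A, p = ∑ i, ψ (r i) * y ^ (i : ℕ) := by
  obtain ⟨c, hc⟩ := hf.exists_eq_sum_comp_mul_X_pow hn hn0 (φ p)
  refine ⟨fun i => Function.surjInv hφ' (c i), hφ ?_⟩
  simp [hc, hψ, hy, Function.surjInv_eq hφ']

theorem MvPolynomial.map_aeval_eq_comp {σ K R F : Type*} [CommRing K] [CommRing R] [Algebra K R]
    [FunLike F (MvPolynomial σ K) (Polynomial R)]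
    [AlgHomClass F K (MvPolynomial σ K) (Polynomial R)]
    (φ φ' : F) {g : σ → MvPolynomial σ K} {f : Polynomial R}
    (h : ∀ i, φ (g i) = (φ' (X i)).comp f) (q : MvPolynomial σ K) :
    φ (aeval g q) = (φ' q).comp f := by
  have : (AlgHomClass.toAlgHom φ).comp (aeval g) =
      ((Polynomial.aeval f).restrictScalars K).comp (AlgHomClass.toAlgHom φ') :=
    algHom_ext fun i => by simp [h, Polynomial.comp_eq_aeval]
  simpa [Polynomial.comp_eq_aeval] using congrArg (· q) this

theorem eq_zero_of_add_mul_add_mul_sq_eq {R : Type*} [CommRing R] [IsDomain R] {a u w x y z : R}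
    (hxy : x ≠ y) (hxz : x ≠ z) (hyz : y ≠ z) (hy : a + u * x + w * x ^ 2 = a + u * y + w * y ^ 2)
    (hz : a + u * x + w * x ^ 2 = a + u * z + w * z ^ 2) :
    u = 0 ∧ w = 0 := by
  have hy' : u + w * (x + y) = 0 := by
    refine (mul_eq_zero.mp ?_).resolve_left (sub_ne_zero.mpr hxy)
    linear_combination hy
  have hz' : u + w * (x + z) = 0 := by
    refine (mul_eq_zero.mp ?_).resolve_left (sub_ne_zero.mpr hxz)
    linear_combination hz
  have hw : w = 0 := by
    refine (mul_eq_zero.mp ?_).resolve_right (sub_ne_zero.mpr hyz)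
    linear_combination hy' - hz'
  exact ⟨by simpa [hw] using hy', hw⟩

noncomputable section

namespace Dickson

section DicksonPolynomial

variable {n : ℕ}

def linearForm (v : Fin n → ZMod 2) : MvPolynomial (Fin n) (ZMod 2) := ∑ i, v i • X i

theorem substAction_linearForm (g : GL (Fin n) (ZMod 2)) (v : Fin n → ZMod 2) :
    substAction g (linearForm v) = linearForm (v ᵥ* (g : Matrix (Fin n) (Fin n) (ZMod 2))) := by
  simp only [linearForm, substAction, map_sum, map_smul, aeval_X, Finset.smul_sum, smul_smul,
    vecMul, dotProduct, Finset.sum_smul]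
  exact Finset.sum_comm

def dicksonPoly (n : ℕ) : Polynomial (MvPolynomial (Fin n) (ZMod 2)) :=
  ∏ v : Fin n → ZMod 2, (Polynomial.X + Polynomial.C (linearForm v))

theorem map_dicksonPoly (g : GL (Fin n) (ZMod 2)) :
    (dicksonPoly n).map (substAction g) = dicksonPoly n := by
  simp only [dicksonPoly, Polynomial.map_prod, Polynomial.map_add, Polynomial.map_X,
    Polynomial.map_C, RingHom.coe_coe, substAction_linearForm]
  exact Fintype.prod_bijective _ ⟨vecMul_injective_of_isUnit g.isUnit,
    vecMul_surjective_iff_isUnit.mpr g.isUnit⟩ _ _ fun _ => rfl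

end DicksonPolynomial

def d₁ : MvPolynomial (Fin 2) (ZMod 2) := X 0 ^ 2 + X 0 * X 1 + X 1 ^ 2

def d₂ : MvPolynomial (Fin 2) (ZMod 2) := X 0 ^ 2 * X 1 + X 0 * X 1 ^ 2

theorem dicksonPoly_two :
    dicksonPoly 2 = Polynomial.X ^ 4 + Polynomial.C d₁ * Polynomial.X ^ 2 +
      Polynomial.C d₂ * Polynomial.X := by
  have huniv : (Finset.univ : Finset (ZMod 2)) = {0, 1} := rfl
  rw [dicksonPoly, ← (piFinTwoEquiv fun _ => ZMod 2).symm.prod_comp]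
  simp only [linearForm, piFinTwoEquiv_symm_apply, Fin.sum_univ_two, Fin.cons_zero, Fin.cons_one,
    map_add, Fintype.prod_prod_type, huniv, Finset.prod_insert, Finset.mem_singleton, zero_ne_one,
    not_false_eq_true, Finset.prod_singleton, zero_smul, one_smul, map_zero, add_zero, zero_add,
    d₁, d₂, map_pow, map_mul]
  linear_combination (Polynomial.X ^ 3 * (Polynomial.C (X 0) + Polynomial.C (X 1)) +
    Polynomial.X ^ 2 * Polynomial.C (X 0) * Polynomial.C (X 1)) *
    CharTwo.two_eq_zero (R := Polynomial (MvPolynomial (Fin 2) (ZMod 2)))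

theorem substAction_d₁ (g : GL (Fin 2) (ZMod 2)) : substAction g d₁ = d₁ := by
  simpa [dicksonPoly_two] using congrArg (Polynomial.coeff · 2) (map_dicksonPoly g)

theorem substAction_d₂ (g : GL (Fin 2) (ZMod 2)) : substAction g d₂ = d₂ := by
  simpa [dicksonPoly_two] using congrArg (Polynomial.coeff · 1) (map_dicksonPoly g)

def polyInX₀ :
    MvPolynomial (Fin 2) (ZMod 2) ≃ₐ[ZMod 2] Polynomial (MvPolynomial (Fin 1) (ZMod 2)) :=
  finSuccEquiv (ZMod 2) 1

def polyInX₁ :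
    MvPolynomial (Fin 2) (ZMod 2) ≃ₐ[ZMod 2] Polynomial (MvPolynomial (Fin 1) (ZMod 2)) :=
  (renameEquiv (ZMod 2) (Equiv.swap 0 1)).trans polyInX₀

@[simp] theorem polyInX₀_X_zero : polyInX₀ (X 0) = Polynomial.X := finSuccEquiv_X_zero

@[simp] theorem polyInX₀_X_one : polyInX₀ (X 1) = Polynomial.C (X 0) := finSuccEquiv_X_succ (j := 0)

@[simp] theorem polyInX₁_X_zero : polyInX₁ (X 0) = Polynomial.C (X 0) := by simp [polyInX₁]

@[simp] theorem polyInX₁_X_one : polyInX₁ (X 1) = Polynomial.X := by simp [polyInX₁]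

def substX₀D₁ : MvPolynomial (Fin 2) (ZMod 2) →ₐ[ZMod 2] MvPolynomial (Fin 2) (ZMod 2) :=
  aeval ![X 0, d₁]

def substX₁Cubic : MvPolynomial (Fin 2) (ZMod 2) →ₐ[ZMod 2] MvPolynomial (Fin 2) (ZMod 2) :=
  aeval ![X 1, X 0 ^ 3 + X 0 * X 1]

def substDickson : MvPolynomial (Fin 2) (ZMod 2) →ₐ[ZMod 2] MvPolynomial (Fin 2) (ZMod 2) :=
  aeval ![d₁, d₂]

theorem polyInX₁_substX₀D₁ (q : MvPolynomial (Fin 2) (ZMod 2)) :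
    polyInX₁ (substX₀D₁ q) = (polyInX₁ q).comp (polyInX₁ d₁) :=
  map_aeval_eq_comp polyInX₁ polyInX₁ (Fin.forall_fin_two.mpr ⟨by simp, by simp⟩) q

theorem polyInX₀_substX₁Cubic (q : MvPolynomial (Fin 2) (ZMod 2)) :
    polyInX₀ (substX₁Cubic q) = (polyInX₁ q).comp (polyInX₀ (X 0 ^ 3 + X 0 * X 1)) :=
  map_aeval_eq_comp polyInX₀ polyInX₁ (Fin.forall_fin_two.mpr ⟨by simp, by simp⟩) q

theorem polyInX₁_d₁ : polyInX₁ d₁ =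
    Polynomial.X ^ 2 + Polynomial.C (X 0) * Polynomial.X + Polynomial.C (X 0 ^ 2) := by
  simp only [d₁, map_add, map_pow, map_mul, polyInX₁_X_zero, polyInX₁_X_one]
  ring

theorem polyInX₀_cubic : polyInX₀ (X 0 ^ 3 + X 0 * X 1) =
    Polynomial.X ^ 3 + Polynomial.C (X 0) * Polynomial.X := by
  simp

theorem monic_polyInX₁_d₁ : (polyInX₁ d₁).Monic := by rw [polyInX₁_d₁]; monicity!

theorem natDegree_polyInX₁_d₁ : (polyInX₁ d₁).natDegree = 2 := by rw [polyInX₁_d₁]; compute_degree!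

theorem monic_polyInX₀_cubic : (polyInX₀ (X 0 ^ 3 + X 0 * X 1)).Monic := by
  rw [polyInX₀_cubic]; monicity!

theorem natDegree_polyInX₀_cubic : (polyInX₀ (X 0 ^ 3 + X 0 * X 1)).natDegree = 3 := by
  rw [polyInX₀_cubic]; compute_degree!

theorem substX₀D₁_injective : Function.Injective substX₀D₁ := by
  refine Function.Injective.of_comp (f := polyInX₁) ?_
  have := (Polynomial.comp_left_injective (f := polyInX₁ d₁)
    (by rw [natDegree_polyInX₁_d₁]; norm_num)).comp polyInX₁.injective
  simpa [Function.comp_def, polyInX₁_substX₀D₁] using this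

theorem substX₁Cubic_injective : Function.Injective substX₁Cubic := by
  refine Function.Injective.of_comp (f := polyInX₀) ?_
  have := (Polynomial.comp_left_injective (f := polyInX₀ (X 0 ^ 3 + X 0 * X 1))
    (by rw [natDegree_polyInX₀_cubic]; norm_num)).comp polyInX₁.injective
  simpa [Function.comp_def, polyInX₀_substX₁Cubic] using this

theorem substX₀D₁_substX₁Cubic (q : MvPolynomial (Fin 2) (ZMod 2)) :
    substX₀D₁ (substX₁Cubic q) = substDickson q := by
  have hd₂ : substX₀D₁ (X 0 ^ 3 + X 0 * X 1) = d₂ := by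
    simp only [substX₀D₁, d₁, d₂, map_add, map_mul, map_pow, aeval_X, cons_val_zero,
      cons_val_one, cons_val_fin_one]
    linear_combination X 0 ^ 3 * CharTwo.two_eq_zero (R := MvPolynomial (Fin 2) (ZMod 2))
  rw [substX₁Cubic, comp_aeval_apply, substDickson]
  exact congrArg (aeval · q) (funext (Fin.forall_fin_two.mpr ⟨by simp [substX₀D₁], hd₂⟩))

theorem substDickson_injective : Function.Injective substDickson := by
  have := substX₀D₁_injective.comp substX₁Cubic_injective
  simpa [Function.comp_def, substX₀D₁_substX₁Cubic] using this

theorem substAction_substDickson (g : GL (Fin 2) (ZMod 2)) (q : MvPolynomial (Fin 2) (ZMod 2)) :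
    substAction g (substDickson q) = substDickson q := by
  rw [substDickson, comp_aeval_apply]
  exact congrArg (aeval · q) (funext (Fin.forall_fin_two.mpr ⟨substAction_d₁ g, substAction_d₂ g⟩))

theorem range_substDickson :
    substDickson.range = Algebra.adjoin (ZMod 2) {d₁, d₂} := by
  rw [substDickson, ← Algebra.adjoin_range_eq_range_aeval, range_cons_cons_empty]

def transvection : GL (Fin 2) (ZMod 2) :=
  ⟨!![1, 0; 1, 1], !![1, 0; 1, 1], by decide, by decide⟩

def rotation : GL (Fin 2) (ZMod 2) :=
  ⟨!![0, 1; 1, 1], !![1, 1; 1, 0], by decide, by decide⟩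

@[simp] theorem substAction_transvection_X_zero : substAction transvection (X 0) = X 0 := by
  simp [substAction, transvection, Fin.sum_univ_two]

@[simp] theorem substAction_transvection_X_one : substAction transvection (X 1) = X 0 + X 1 := by
  simp [substAction, transvection, Fin.sum_univ_two]

@[simp] theorem substAction_rotation_X_zero : substAction rotation (X 0) = X 1 := by
  simp [substAction, rotation, Fin.sum_univ_two]

@[simp] theorem substAction_rotation_X_one : substAction rotation (X 1) = X 0 + X 1 := by
  simp [substAction, rotation, Fin.sum_univ_two]

theorem substAction_transvection_substX₀D₁ (q : MvPolynomial (Fin 2) (ZMod 2)) :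
    substAction transvection (substX₀D₁ q) = substX₀D₁ q := by
  rw [substX₀D₁, comp_aeval_apply]
  exact congrArg (aeval · q) (funext (Fin.forall_fin_two.mpr
    ⟨substAction_transvection_X_zero, substAction_d₁ transvection⟩))

theorem exists_eq_substX₀D₁_of_transvection (p : MvPolynomial (Fin 2) (ZMod 2))
    (hp : substAction transvection p = p) : ∃ q, p = substX₀D₁ q := by
  obtain ⟨r, hr⟩ := exists_eq_sum_mul_pow_of_map_eq_comp polyInX₁.injective polyInX₁.surjective
    polyInX₁_substX₀D₁ monic_polyInX₁_d₁ natDegree_polyInX₁_d₁ two_ne_zero polyInX₁_X_one p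
  simp only [Fin.sum_univ_two, Fin.val_zero, Fin.val_one, pow_zero, pow_one, mul_one] at hr
  have hr₁ : substX₀D₁ (r 1) * X 0 = 0 := by
    rw [hr] at hp
    simp only [map_add, map_mul, substAction_transvection_substX₀D₁,
      substAction_transvection_X_one] at hp
    linear_combination hp
  refine ⟨r 0, ?_⟩
  rw [hr, (mul_eq_zero.mp hr₁).resolve_right (X_ne_zero 0), zero_mul, add_zero]

theorem exists_substX₀D₁_eq_substDickson (q : MvPolynomial (Fin 2) (ZMod 2)) :
    ∃ r : Fin 3 → MvPolynomial (Fin 2) (ZMod 2), substX₀D₁ q =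
      substDickson (r 0) + substDickson (r 1) * X 0 + substDickson (r 2) * X 0 ^ 2 := by
  obtain ⟨r, hr⟩ := exists_eq_sum_mul_pow_of_map_eq_comp polyInX₀.injective polyInX₁.surjective
    polyInX₀_substX₁Cubic monic_polyInX₀_cubic natDegree_polyInX₀_cubic three_ne_zero
    polyInX₀_X_zero q
  have hX₀ : substX₀D₁ (X 0) = X 0 := by simp [substX₀D₁]
  refine ⟨r, ?_⟩
  simp [hr, Fin.sum_univ_three, substX₀D₁_substX₁Cubic, hX₀]

theorem mem_adjoin_of_forall_substAction_eq (p : MvPolynomial (Fin 2) (ZMod 2))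
    (hp : ∀ g, substAction g p = p) : p ∈ Algebra.adjoin (ZMod 2) {d₁, d₂} := by
  obtain ⟨q, rfl⟩ := exists_eq_substX₀D₁_of_transvection p (hp transvection)
  obtain ⟨r, hr⟩ := exists_substX₀D₁_eq_substDickson q
  set a := substDickson (r 0)
  set u := substDickson (r 1)
  set w := substDickson (r 2)
  have hτ : ∀ ℓ, substAction rotation (a + u * ℓ + w * ℓ ^ 2) =
      a + u * substAction rotation ℓ + w * substAction rotation ℓ ^ 2 := by
    simp [a, u, w, substAction_substDickson]
  have h₁ : a + u * X 0 + w * X 0 ^ 2 = a + u * X 1 + w * X 1 ^ 2 := by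
    rw [← hr, ← hp rotation, hr, hτ, substAction_rotation_X_zero]
  have h₂ : a + u * X 0 + w * X 0 ^ 2 = a + u * (X 0 + X 1) + w * (X 0 + X 1) ^ 2 := by
    rw [← hr, ← hp rotation, ← hp rotation, hr, hτ, hτ, substAction_rotation_X_zero,
      substAction_rotation_X_one]
  obtain ⟨hu, hw⟩ := eq_zero_of_add_mul_add_mul_sq_eq (X_injective.ne (by decide))
    (by simp [X_ne_zero]) (by simp [X_ne_zero]) h₁ h₂
  rw [hr, hu, hw, zero_mul, zero_mul, add_zero, add_zero, ← range_substDickson]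
  exact ⟨r 0, rfl⟩

theorem substAction_eq_of_mem_adjoin {p : MvPolynomial (Fin 2) (ZMod 2)}
    (hp : p ∈ Algebra.adjoin (ZMod 2) {d₁, d₂}) (g : GL (Fin 2) (ZMod 2)) :
    substAction g p = p := by
  rw [← range_substDickson] at hp
  obtain ⟨q, rfl⟩ := hp
  exact substAction_substDickson g q

end Dickson

end

theorem dickson_invariants_D2 :
    (∀ p : MvPolynomial (Fin 2) (ZMod 2),
      (∀ g : GL (Fin 2) (ZMod 2), substAction g p = p) ↔
        p ∈ Algebra.adjoin (ZMod 2)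
          ({X 0 ^ 2 + X 0 * X 1 + X 1 ^ 2,
            X 0 ^ 2 * X 1 + X 0 * X 1 ^ 2} :
            Set (MvPolynomial (Fin 2) (ZMod 2)))) ∧
    AlgebraicIndependent (ZMod 2)
      ![(X 0 ^ 2 + X 0 * X 1 + X 1 ^ 2 : MvPolynomial (Fin 2) (ZMod 2)),
        X 0 ^ 2 * X 1 + X 0 * X 1 ^ 2] :=
  ⟨fun p => ⟨Dickson.mem_adjoin_of_forall_substAction_eq p, Dickson.substAction_eq_of_mem_adjoin⟩,
    algebraicIndependent_iff_injective_aeval.mpr Dickson.substDickson_injective⟩
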